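/- (Bounds for preconditioned gradient descent.) Let d ≥ 1, n ≥ 2, σ > 0, η ≥ 0, β ≥ 0, B ≥ 0. Let g_1, …, g_n ∈ ℝ^d satisfy ‖g_u‖ ≤ B for all u, with mean μ = (1/n)·Σ_v g_v and leave-one-out means μ_{-u} = (1/(n−1))·Σ_{v≠u} g_v. Let M_1, …, M_n be continuous linear maps on ℝ^d with average M̄ = (1/n)·Σ_v M_v, satisfying the stability condition ‖M_u − M_v‖ ≤ β/n in operator norm for all u, v. Let Θ₀ ∈ ℝ^d, set δ_u = −η·M_u(μ_{-u}), let P_u = N(Θ₀ + δ_u, σ²I) be the isotropic Gaussian on ℝ^d with mean Θ₀ + δ_u, and P̄ = (1/n)·Σ_v P_v. Then (1/n)·Σ_{u=1}^n KL(P_u ‖ P̄) ≤ (3η²/σ²)·(n/(n−1))²·(1/n)·Σ_{u=1}^n ‖(M_u − M̄)μ‖² + (3η²/(σ²(n−1)²))·(1/n)·Σ_{u=1}^n ‖M_u(g_u − μ)‖² + 3η²β²B²/(σ²(n−1)²n²). -/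

import Mathlib

open MeasureTheory ProbabilityTheory Finset
open scoped ENNReal NNReal

/-- The isotropic Gaussian measure `N(a, σ²I)` on `ℝ^d`, i.e. the product over the `d`
coordinates of one-dimensional Gaussian measures with means `a i` and common variance `σ²`. -/
noncomputable def gaussianPi {d : ℕ} (a : EuclideanSpace ℝ (Fin d)) (σ : ℝ) :
    Measure (EuclideanSpace ℝ (Fin d)) :=
  (Measure.pi fun i => gaussianReal (a i) ((σ ^ 2).toNNReal)).map (WithLp.toLp 2)

open Classical in
/-- The Kullback–Leibler divergence `KL(μ‖ν) = ∫ log(dμ/dν) dμ` (valued in `ℝ≥0∞`),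
defined when `μ ≪ ν` and the log-likelihood ratio is integrable, and `∞` otherwise. -/
noncomputable def klDiv {α : Type*} [MeasurableSpace α] (μ ν : Measure α) : ℝ≥0∞ :=
  if μ ≪ ν ∧ Integrable (llr μ ν) μ then ENNReal.ofReal (∫ x, llr μ ν x ∂μ) else ⊤

/-!
Every `P_u` and the mixture `P̄` have everywhere positive densities, and concavity of `log`
gives pointwise `log (dP_u/dP̄) ≤ (1/n) ∑_v log (dP_u/dP_v)`; integrating,
`KL(P_u ‖ P̄) ≤ (1/n) ∑_v KL(P_u ‖ P_v) = (1/n) ∑_v ‖δ_u - δ_v‖² / (2σ²)`.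
With `x_u = M_u μ_{-u}` one has `x_u - M̄ μ = (M_u - M̄) μ - (n - 1)⁻¹ M_u (g_u - μ)`, and the
pairwise spread `∑_{u,v} ‖x_u - x_v‖²` is at most `2n ∑_u ‖x_u - z‖²` for any centre `z`, which
yields the bias and variance terms.
-/

open Real

lemma log_div_inv_card_mul_sum_le {ι : Type*} [Fintype ι] [Nonempty ι] {a : ℝ} (ha : 0 < a)
    {b : ι → ℝ} (hb : ∀ i, 0 < b i) :
    log (a / ((Fintype.card ι : ℝ)⁻¹ * ∑ i, b i))
      ≤ (Fintype.card ι : ℝ)⁻¹ * ∑ i, log (a / b i) := by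
  have hcard : (0 : ℝ) < Fintype.card ι := by exact_mod_cast Fintype.card_pos
  have hjensen := strictConcaveOn_log_Ioi.concaveOn.le_map_sum (t := univ)
    (w := fun _ => (Fintype.card ι : ℝ)⁻¹) (p := b) (fun _ _ => by positivity)
    (by simp [hcard.ne']) (fun i _ => hb i)
  simp only [smul_eq_mul, ← mul_sum] at hjensen
  rw [log_div ha.ne' (mul_pos (inv_pos.2 hcard) (sum_pos (fun i _ => hb i) univ_nonempty)).ne']
  simp only [log_div ha.ne' (hb _).ne', sum_sub_distrib, sum_const, card_univ, nsmul_eq_mul,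
    mul_sub, inv_mul_cancel_left₀ hcard.ne']
  linarith

lemma inv_natCast_mul_sum_ofReal {ι : Type*} [Fintype ι] {n : ℕ} (hn : n ≠ 0) {f : ι → ℝ}
    (hf : ∀ i, 0 ≤ f i) :
    (n : ℝ≥0∞)⁻¹ * ∑ i, ENNReal.ofReal (f i) = ENNReal.ofReal ((n : ℝ)⁻¹ * ∑ i, f i) := by
  rw [ENNReal.ofReal_mul (by positivity), ENNReal.ofReal_inv_of_pos (by positivity),
    ENNReal.ofReal_natCast, ENNReal.ofReal_sum_of_nonneg fun i _ => hf i]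

section KullbackLeibler

variable {α : Type*} [MeasurableSpace α]

lemma klDiv_ne_top_iff {μ ν : Measure α} :
    klDiv μ ν ≠ ⊤ ↔ μ ≪ ν ∧ Integrable (llr μ ν) μ := by
  by_cases h : μ ≪ ν ∧ Integrable (llr μ ν) μ <;> simp [klDiv, h]

lemma klDiv_of_ac_of_integrable {μ ν : Measure α} (hμν : μ ≪ ν)
    (h_int : Integrable (llr μ ν) μ) : klDiv μ ν = ENNReal.ofReal (∫ x, llr μ ν x ∂μ) := by
  rw [klDiv, if_pos ⟨hμν, h_int⟩]

/-- Mathlib's divergence carries the correction `ν.real univ - μ.real univ`, zero here. -/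
lemma klDiv_eq_informationTheory_klDiv (μ ν : Measure α) [IsProbabilityMeasure μ]
    [IsProbabilityMeasure ν] : klDiv μ ν = InformationTheory.klDiv μ ν := by
  by_cases h : μ ≪ ν ∧ Integrable (llr μ ν) μ
  · rw [klDiv_of_ac_of_integrable h.1 h.2, InformationTheory.klDiv_of_ac_of_integrable h.1 h.2]
    simp
  · rw [klDiv, if_neg h, eq_comm, InformationTheory.klDiv_eq_top_iff]
    tauto

lemma klDiv_map_le {β : Type*} [MeasurableSpace β] (μ ν : Measure α) [IsProbabilityMeasure μ]
    [IsProbabilityMeasure ν] {f : α → β} (hf : Measurable f) :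
    klDiv (μ.map f) (ν.map f) ≤ klDiv μ ν := by
  have := Measure.isProbabilityMeasure_map (μ := μ) hf.aemeasurable
  have := Measure.isProbabilityMeasure_map (μ := ν) hf.aemeasurable
  simpa only [klDiv_eq_informationTheory_klDiv] using InformationTheory.klDiv_map_le μ ν hf

/-- Since `-llr μ ν ≤ dν/dμ - 1`, an integrable upper bound suffices. -/
lemma integrable_llr_of_ae_le {μ ν : Measure α} [IsFiniteMeasure μ] [IsFiniteMeasure ν]
    (hμν : μ ≪ ν) {L : α → ℝ} (hL : Integrable L μ) (hle : llr μ ν ≤ᵐ[μ] L) :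
    Integrable (llr μ ν) μ := by
  refine integrable_of_le_of_le (stronglyMeasurable_llr μ ν).aestronglyMeasurable ?_ hle
    ((integrable_const 1).sub (Measure.integrable_toReal_rnDeriv (μ := ν) (ν := μ))) hL
  filter_upwards [exp_neg_llr hμν] with x hx
  have := add_one_le_exp (-llr μ ν x)
  simp only [Pi.sub_apply]
  linarith

lemma llr_withDensity_ofReal (ν : Measure α) [SigmaFinite ν] {f g : α → ℝ}
    (hf : Measurable f) (hg : Measurable g) (hf_nonneg : ∀ x, 0 ≤ f x) (hg_pos : ∀ x, 0 < g x) :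
    llr (ν.withDensity fun x => ENNReal.ofReal (f x))
        (ν.withDensity fun x => ENNReal.ofReal (g x))
      =ᵐ[ν] fun x => log (f x / g x) := by
  filter_upwards [Measure.rnDeriv_withDensity_right (ν.withDensity fun x => ENNReal.ofReal (f x))
      ν hg.ennreal_ofReal.aemeasurable (ae_of_all _ fun x => by simp [hg_pos x])
      (ae_of_all _ fun x => ENNReal.ofReal_ne_top),
    Measure.rnDeriv_withDensity ν hf.ennreal_ofReal] with x hx hfx
  rw [llr, hx, hfx, ENNReal.toReal_mul, ENNReal.toReal_inv, ENNReal.toReal_ofReal (hg_pos x).le,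
    ENNReal.toReal_ofReal (hf_nonneg x), inv_mul_eq_div]

variable {ι : Type*} [Fintype ι]

lemma isProbabilityMeasure_inv_card_smul_sum [Nonempty ι] (P : ι → Measure α)
    [∀ i, IsProbabilityMeasure (P i)] :
    IsProbabilityMeasure ((Fintype.card ι : ℝ≥0∞)⁻¹ • ∑ i, P i) := by
  constructor
  simp [Measure.finsetSum_apply, ENNReal.inv_mul_cancel]

lemma absolutelyContinuous_inv_card_smul_sum (P : ι → Measure α) (u : ι) :
    P u ≪ (Fintype.card ι : ℝ≥0∞)⁻¹ • ∑ i, P i := fun s hs => by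
  simp_all [Measure.finsetSum_apply]

lemma inv_card_smul_sum_withDensity_ofReal [Nonempty ι] (ν : Measure α)
    {f : ι → α → ℝ} (hf : ∀ i, Measurable (f i)) (hf_nonneg : ∀ i x, 0 ≤ f i x) :
    (Fintype.card ι : ℝ≥0∞)⁻¹ • ∑ i, ν.withDensity (fun x => ENNReal.ofReal (f i x))
      = ν.withDensity fun x => ENNReal.ofReal ((Fintype.card ι : ℝ)⁻¹ * ∑ i, f i x) := by
  ext s hs
  simp only [Measure.smul_apply, Measure.finsetSum_apply, withDensity_apply _ hs, smul_eq_mul,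
    ENNReal.ofReal_mul (inv_nonneg.2 (Nat.cast_nonneg _)),
    ENNReal.ofReal_sum_of_nonneg fun i _ => hf_nonneg i _]
  rw [lintegral_const_mul _ (Finset.measurable_sum _ fun i _ => (hf i).ennreal_ofReal),
    lintegral_finsetSum _ fun i _ => (hf i).ennreal_ofReal,
    ENNReal.ofReal_inv_of_pos (by exact_mod_cast Fintype.card_pos), ENNReal.ofReal_natCast]

lemma llr_inv_card_smul_sum_ae_le [Nonempty ι] (ν : Measure α) [SigmaFinite ν]
    {f : ι → α → ℝ} (hf : ∀ i, Measurable (f i)) (hf_pos : ∀ i x, 0 < f i x)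
    {P : ι → Measure α} (hP : ∀ i, P i = ν.withDensity fun x => ENNReal.ofReal (f i x))
    (u : ι) :
    llr (P u) ((Fintype.card ι : ℝ≥0∞)⁻¹ • ∑ i, P i)
      ≤ᵐ[P u] fun x => (Fintype.card ι : ℝ)⁻¹ * ∑ i, llr (P u) (P i) x := by
  set fbar : α → ℝ := fun x => (Fintype.card ι : ℝ)⁻¹ * ∑ i, f i x
  have hfbar_pos x : 0 < fbar x :=
    mul_pos (inv_pos.2 (by exact_mod_cast Fintype.card_pos))
      (sum_pos (fun i _ => hf_pos i x) univ_nonempty)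
  have hllr_mix : llr (P u) ((Fintype.card ι : ℝ≥0∞)⁻¹ • ∑ i, P i)
      =ᵐ[ν] fun x => log (f u x / fbar x) := by
    simp only [hP, inv_card_smul_sum_withDensity_ofReal ν hf fun i x => (hf_pos i x).le]
    exact llr_withDensity_ofReal ν (hf u) ((Finset.measurable_sum _ fun i _ => hf i).const_mul _)
      (hf_pos u · |>.le) hfbar_pos
  have hllr i : llr (P u) (P i) =ᵐ[ν] fun x => log (f u x / f i x) := by
    rw [hP u, hP i]
    exact llr_withDensity_ofReal ν (hf u) (hf i) (hf_pos u · |>.le) (hf_pos i)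
  have hPu_ac : P u ≪ ν := hP u ▸ withDensity_absolutelyContinuous _ _
  filter_upwards [hPu_ac.ae_le hllr_mix, hPu_ac.ae_le (ae_all_iff.2 hllr)] with x hx hxi
  simp only [hx, hxi]
  exact log_div_inv_card_mul_sum_le (hf_pos u x) (hf_pos · x)

lemma klDiv_inv_card_smul_sum_le (ν : Measure α) [SigmaFinite ν]
    {f : ι → α → ℝ} (hf : ∀ i, Measurable (f i)) (hf_pos : ∀ i x, 0 < f i x)
    {P : ι → Measure α} (hP : ∀ i, P i = ν.withDensity fun x => ENNReal.ofReal (f i x))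
    [∀ i, IsProbabilityMeasure (P i)] (u : ι) :
    klDiv (P u) ((Fintype.card ι : ℝ≥0∞)⁻¹ • ∑ i, P i)
      ≤ (Fintype.card ι : ℝ≥0∞)⁻¹ * ∑ i, klDiv (P u) (P i) := by
  have : Nonempty ι := ⟨u⟩
  by_cases htop : ∃ i, klDiv (P u) (P i) = ⊤
  · obtain ⟨i, hi⟩ := htop
    rw [ENNReal.sum_eq_top.2 ⟨i, mem_univ i, hi⟩, ENNReal.mul_top (by simp)]
    exact le_top
  push Not at htop
  obtain ⟨hac_i, hint⟩ := forall_and.1 fun i => klDiv_ne_top_iff.1 (htop i)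
  have := isProbabilityMeasure_inv_card_smul_sum P
  have hL_int : Integrable (fun x => (Fintype.card ι : ℝ)⁻¹ * ∑ i, llr (P u) (P i) x) (P u) :=
    (integrable_finsetSum _ fun i _ => hint i).const_mul _
  have hle := llr_inv_card_smul_sum_ae_le ν hf hf_pos hP u
  have hac := absolutelyContinuous_inv_card_smul_sum P u
  have hint_mix := integrable_llr_of_ae_le hac hL_int hle
  rw [klDiv_of_ac_of_integrable hac hint_mix]
  calc ENNReal.ofReal (∫ x, llr (P u) _ x ∂(P u))
      ≤ ENNReal.ofReal ((Fintype.card ι : ℝ)⁻¹ * ∑ i, ∫ x, llr (P u) (P i) x ∂(P u)) := by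
        rw [← integral_finsetSum _ fun i _ => hint i, ← integral_const_mul]
        exact ENNReal.ofReal_le_ofReal (integral_mono_ae hint_mix hL_int hle)
    _ ≤ _ := by
        rw [ENNReal.ofReal_mul (by positivity), ENNReal.ofReal_inv_of_pos
          (by exact_mod_cast Fintype.card_pos), ENNReal.ofReal_natCast]
        simp only [klDiv_of_ac_of_integrable (hac_i _) (hint _)]
        gcongr
        exact le_sum_of_subadditive _ ENNReal.ofReal_zero.le
          (fun _ _ => ENNReal.ofReal_add_le) _ _

end KullbackLeibler

section Gaussian

lemma pi_withDensity_ofReal {ι : Type*} [Fintype ι] {X : ι → Type*}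
    [∀ i, MeasurableSpace (X i)] (μ : ∀ i, Measure (X i)) [∀ i, SigmaFinite (μ i)]
    {f : ∀ i, X i → ℝ} (hf_nonneg : ∀ i x, 0 ≤ f i x) (hf : ∀ i, Integrable (f i) (μ i)) :
    Measure.pi (fun i => (μ i).withDensity fun x => ENNReal.ofReal (f i x))
      = (Measure.pi μ).withDensity fun x => ENNReal.ofReal (∏ i, f i (x i)) := by
  refine Measure.pi_eq fun s hs => ?_
  rw [withDensity_apply _ (MeasurableSet.univ_pi hs), Measure.restrict_pi_pi,
    ← ofReal_integral_eq_lintegral_ofReal (Integrable.fintype_prod_dep fun i => (hf i).restrict)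
      (ae_of_all _ fun x => prod_nonneg fun i _ => hf_nonneg i _),
    integral_fintype_prod_eq_prod, ENNReal.ofReal_prod_of_nonneg
      fun i _ => integral_nonneg (hf_nonneg i)]
  refine prod_congr rfl fun i _ => ?_
  rw [withDensity_apply _ (hs i),
    ofReal_integral_eq_lintegral_ofReal (hf i).restrict (ae_of_all _ (hf_nonneg i))]

variable {ι : Type*} [Fintype ι]

noncomputable def gaussianPDFRealPi (a : ι → ℝ) (v : ℝ≥0) (x : ι → ℝ) : ℝ :=
  ∏ i, gaussianPDFReal (a i) v (x i)

lemma measurable_gaussianPDFRealPi (a : ι → ℝ) (v : ℝ≥0) :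
    Measurable (gaussianPDFRealPi a v) :=
  Finset.measurable_prod _ fun i _ => (measurable_gaussianPDFReal _ _).comp (measurable_pi_apply i)

lemma gaussianPDFRealPi_pos (a : ι → ℝ) {v : ℝ≥0} (hv : v ≠ 0) (x : ι → ℝ) :
    0 < gaussianPDFRealPi a v x :=
  prod_pos fun _ _ => gaussianPDFReal_pos _ _ _ hv

lemma pi_gaussianReal_eq_withDensity (a : ι → ℝ) {v : ℝ≥0} (hv : v ≠ 0) :
    Measure.pi (fun i => gaussianReal (a i) v)
      = (Measure.pi fun _ => volume).withDensity
          fun x => ENNReal.ofReal (gaussianPDFRealPi a v x) := by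
  simp_rw [gaussianReal_of_var_ne_zero _ hv, gaussianPDF_def]
  exact pi_withDensity_ofReal _ (fun _ => gaussianPDFReal_nonneg _ _)
    fun _ => integrable_gaussianPDFReal _ _

lemma log_gaussianPDFRealPi_div (a b : ι → ℝ) {v : ℝ≥0} (hv : v ≠ 0) (x : ι → ℝ) :
    log (gaussianPDFRealPi a v x / gaussianPDFRealPi b v x)
      = ∑ i, ((x i - b i) ^ 2 - (x i - a i) ^ 2) / (2 * v) := by
  rw [gaussianPDFRealPi, gaussianPDFRealPi, ← prod_div_distrib, log_prod fun i _ =>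
    (div_pos (gaussianPDFReal_pos _ _ _ hv) (gaussianPDFReal_pos _ _ _ hv)).ne']
  refine sum_congr rfl fun i _ => ?_
  rw [gaussianPDFReal, gaussianPDFReal, mul_div_mul_left _ _ (by positivity), ← exp_sub, log_exp]
  ring

lemma integrable_sq_sub_sub_sq_gaussianReal (a b : ℝ) (v : ℝ≥0) :
    Integrable (fun x => (x - b) ^ 2 - (x - a) ^ 2) (gaussianReal a v) := by
  have h : Integrable (fun x : ℝ => x) (gaussianReal a v) :=
    (memLp_id_gaussianReal 1).integrable le_rfl
  simpa [show ∀ x : ℝ, (x - b) ^ 2 - (x - a) ^ 2 = 2 * (a - b) * x + (b ^ 2 - a ^ 2) from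
    fun x => by ring] using (h.const_mul (2 * (a - b))).add (integrable_const (b ^ 2 - a ^ 2))

lemma integral_sq_sub_sub_sq_gaussianReal (a b : ℝ) (v : ℝ≥0) :
    ∫ x, ((x - b) ^ 2 - (x - a) ^ 2) ∂(gaussianReal a v) = (a - b) ^ 2 := by
  have h : Integrable (fun x : ℝ => x) (gaussianReal a v) :=
    (memLp_id_gaussianReal 1).integrable le_rfl
  simp_rw [show ∀ x : ℝ, (x - b) ^ 2 - (x - a) ^ 2 = 2 * (a - b) * x + (b ^ 2 - a ^ 2) from
    fun x => by ring]
  rw [integral_add (h.const_mul _) (integrable_const _), integral_const_mul,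
    integral_id_gaussianReal]
  simp only [integral_const, probReal_univ, smul_eq_mul, one_mul]
  ring

lemma klDiv_pi_gaussianReal (a b : ι → ℝ) {v : ℝ≥0} (hv : v ≠ 0) :
    klDiv (Measure.pi fun i => gaussianReal (a i) v) (Measure.pi fun i => gaussianReal (b i) v)
      = ENNReal.ofReal (∑ i, (a i - b i) ^ 2 / (2 * v)) := by
  set P := Measure.pi fun i => gaussianReal (a i) v with hP
  have hP_ac : P ≪ Measure.pi fun _ => volume := by
    rw [hP, pi_gaussianReal_eq_withDensity a hv]
    exact withDensity_absolutelyContinuous _ _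
  have hac : P ≪ Measure.pi fun i => gaussianReal (b i) v := by
    refine hP_ac.trans ?_
    rw [pi_gaussianReal_eq_withDensity b hv]
    exact withDensity_absolutelyContinuous'
      (measurable_gaussianPDFRealPi b v).ennreal_ofReal.aemeasurable
      (ae_of_all _ fun x => by simp [gaussianPDFRealPi_pos b hv x])
  have hllr : llr P (Measure.pi fun i => gaussianReal (b i) v)
      =ᵐ[P] fun x => ∑ i, ((x i - b i) ^ 2 - (x i - a i) ^ 2) / (2 * v) := by
    have h := llr_withDensity_ofReal (Measure.pi fun _ => volume)
      (measurable_gaussianPDFRealPi a v) (measurable_gaussianPDFRealPi b v)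
      (fun x => (gaussianPDFRealPi_pos a hv x).le) (gaussianPDFRealPi_pos b hv)
    rw [← pi_gaussianReal_eq_withDensity a hv, ← pi_gaussianReal_eq_withDensity b hv] at h
    filter_upwards [hP_ac.ae_le h] with x hx
    rw [hx, log_gaussianPDFRealPi_div a b hv]
  have hterm i :
      Integrable (fun x : ι → ℝ => ((x i - b i) ^ 2 - (x i - a i) ^ 2) / (2 * v)) P :=
    integrable_comp_eval (μ := fun i => gaussianReal (a i) v)
      ((integrable_sq_sub_sub_sq_gaussianReal (a i) (b i) v).div_const _)
  rw [klDiv_of_ac_of_integrable hac ((integrable_finsetSum _ fun i _ => hterm i).congr hllr.symm),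
    integral_congr_ae hllr, integral_finsetSum _ fun i _ => hterm i]
  congr 1
  refine sum_congr rfl fun i _ => ?_
  rw [hP, integral_comp_eval (μ := fun i => gaussianReal (a i) v)
      (f := fun y => ((y - b i) ^ 2 - (y - a i) ^ 2) / (2 * v)) (by fun_prop),
    integral_div, integral_sq_sub_sub_sq_gaussianReal]

lemma klDiv_gaussianPi_inv_card_smul_sum_le {d : ℕ} (a : ι → EuclideanSpace ℝ (Fin d))
    {σ : ℝ} (hσ : σ ≠ 0) (u : ι) :
    klDiv (gaussianPi (a u) σ) ((Fintype.card ι : ℝ≥0∞)⁻¹ • ∑ i, gaussianPi (a i) σ)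
      ≤ (Fintype.card ι : ℝ≥0∞)⁻¹ * ∑ i, ENNReal.ofReal (‖a u - a i‖ ^ 2 / (2 * σ ^ 2)) := by
  have : Nonempty ι := ⟨u⟩
  set v := (σ ^ 2).toNNReal
  have hv : v ≠ 0 := by simp [v, hσ]
  have hvσ : (v : ℝ) = σ ^ 2 := Real.coe_toNNReal _ (sq_nonneg σ)
  set Q : ι → Measure (Fin d → ℝ) := fun i => Measure.pi fun j => gaussianReal (a i j) v
  have := isProbabilityMeasure_inv_card_smul_sum Q
  have hmix : (Fintype.card ι : ℝ≥0∞)⁻¹ • ∑ i, gaussianPi (a i) σ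
      = ((Fintype.card ι : ℝ≥0∞)⁻¹ • ∑ i, Q i).map (WithLp.toLp 2) := by
    ext s hs
    simp [gaussianPi, Measure.map_apply (WithLp.measurable_toLp 2 _) hs, Q, v,
      Measure.finsetSum_apply]
  calc _ = klDiv ((Q u).map (WithLp.toLp 2))
          (((Fintype.card ι : ℝ≥0∞)⁻¹ • ∑ i, Q i).map (WithLp.toLp 2)) := by rw [hmix]; rfl
    _ ≤ klDiv (Q u) ((Fintype.card ι : ℝ≥0∞)⁻¹ • ∑ i, Q i) :=
        klDiv_map_le _ _ (WithLp.measurable_toLp 2 _)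
    _ ≤ (Fintype.card ι : ℝ≥0∞)⁻¹ * ∑ i, klDiv (Q u) (Q i) :=
        klDiv_inv_card_smul_sum_le (Measure.pi fun _ => volume)
          (f := fun i => gaussianPDFRealPi (a i) v) (fun i => measurable_gaussianPDFRealPi _ _)
          (fun i => gaussianPDFRealPi_pos _ hv) (fun i => pi_gaussianReal_eq_withDensity _ hv) u
    _ = _ := by
        simp only [Q, klDiv_pi_gaussianReal _ _ hv, hvσ, EuclideanSpace.real_norm_sq_eq,
          PiLp.sub_apply, sum_div]

lemma inv_card_mul_sum_klDiv_gaussianPi_le [Nonempty ι] {d : ℕ}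
    (a : ι → EuclideanSpace ℝ (Fin d)) {σ : ℝ} (hσ : σ ≠ 0) :
    (Fintype.card ι : ℝ≥0∞)⁻¹
        * ∑ u, klDiv (gaussianPi (a u) σ) ((Fintype.card ι : ℝ≥0∞)⁻¹ • ∑ v, gaussianPi (a v) σ)
      ≤ ENNReal.ofReal ((∑ u, ∑ v, ‖a u - a v‖ ^ 2) / (2 * σ ^ 2 * Fintype.card ι ^ 2)) := by
  have hcard : Fintype.card ι ≠ 0 := Fintype.card_ne_zero
  calc _ ≤ (Fintype.card ι : ℝ≥0∞)⁻¹ * ∑ u, (Fintype.card ι : ℝ≥0∞)⁻¹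
          * ∑ v, ENNReal.ofReal (‖a u - a v‖ ^ 2 / (2 * σ ^ 2)) := by
        gcongr with u
        exact klDiv_gaussianPi_inv_card_smul_sum_le a hσ u
    _ = ENNReal.ofReal ((Fintype.card ι : ℝ)⁻¹
          * ∑ u, (Fintype.card ι : ℝ)⁻¹ * ∑ v, ‖a u - a v‖ ^ 2 / (2 * σ ^ 2)) := by
        rw [← inv_natCast_mul_sum_ofReal hcard fun u => by positivity]
        exact congrArg _ (sum_congr rfl fun u _ =>
          inv_natCast_mul_sum_ofReal hcard fun v => by positivity)
    _ = _ := by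
        simp_rw [← sum_div, ← mul_sum, ← sum_div]
        field_simp

end Gaussian

section Spread

variable {E : Type*} [NormedAddCommGroup E] [InnerProductSpace ℝ E] {ι : Type*} [Fintype ι]

lemma sum_sum_norm_sub_sq_eq (x : ι → E) :
    ∑ u, ∑ v, ‖x u - x v‖ ^ 2
      = 2 * Fintype.card ι * ∑ u, ‖x u‖ ^ 2 - 2 * ‖∑ u, x u‖ ^ 2 := by
  simp only [norm_sub_sq_real, sum_add_distrib, sum_sub_distrib, sum_const, card_univ,
    nsmul_eq_mul, ← mul_sum, ← inner_sum, ← sum_inner, real_inner_self_eq_norm_sq]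
  ring

lemma sum_sum_norm_sub_sq_le (x : ι → E) (z : E) :
    ∑ u, ∑ v, ‖x u - x v‖ ^ 2 ≤ 2 * Fintype.card ι * ∑ u, ‖x u - z‖ ^ 2 := by
  have h := sum_sum_norm_sub_sq_eq fun u => x u - z
  simp only [sub_sub_sub_cancel_right] at h
  nlinarith [sq_nonneg ‖∑ u, (x u - z)‖]

lemma sum_sum_norm_sub_sq_le_of_sub_eq {x a b : ι → E} {z : E} {c : ℝ}
    (h : ∀ u, x u - z = a u - c • b u) :
    ∑ u, ∑ v, ‖x u - x v‖ ^ 2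
      ≤ 4 * Fintype.card ι * (∑ u, ‖a u‖ ^ 2 + c ^ 2 * ∑ u, ‖b u‖ ^ 2) := by
  have hpt u : ‖x u - z‖ ^ 2 ≤ 2 * (‖a u‖ ^ 2 + c ^ 2 * ‖b u‖ ^ 2) := by
    rw [h u]
    calc ‖a u - c • b u‖ ^ 2 ≤ (‖a u‖ + ‖c • b u‖) ^ 2 := by gcongr; exact norm_sub_le _ _
      _ ≤ 2 * (‖a u‖ ^ 2 + ‖c • b u‖ ^ 2) := add_sq_le
      _ = 2 * (‖a u‖ ^ 2 + c ^ 2 * ‖b u‖ ^ 2) := by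
        rw [norm_smul, mul_pow, Real.norm_eq_abs, sq_abs]
  calc ∑ u, ∑ v, ‖x u - x v‖ ^ 2 ≤ 2 * Fintype.card ι * ∑ u, ‖x u - z‖ ^ 2 :=
        sum_sum_norm_sub_sq_le x z
    _ ≤ 2 * Fintype.card ι * ∑ u, 2 * (‖a u‖ ^ 2 + c ^ 2 * ‖b u‖ ^ 2) := by
        gcongr with u
        exact hpt u
    _ = _ := by
        rw [← mul_sum, sum_add_distrib, ← mul_sum]
        ring

end Spread

lemma inv_card_sub_one_smul_sum_erase {E : Type*} [AddCommGroup E] [Module ℝ E] {ι : Type*}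
    [Fintype ι] [DecidableEq ι] (hι : Fintype.card ι ≠ 1) (g : ι → E) (u : ι) :
    ((Fintype.card ι : ℝ) - 1)⁻¹ • ∑ v ∈ univ.erase u, g v
      = (Fintype.card ι : ℝ)⁻¹ • ∑ v, g v
        - ((Fintype.card ι : ℝ) - 1)⁻¹ • (g u - (Fintype.card ι : ℝ)⁻¹ • ∑ v, g v) := by
  have : Nonempty ι := ⟨u⟩
  have h0 : (Fintype.card ι : ℝ) ≠ 0 := by exact_mod_cast Fintype.card_ne_zero
  have h1 : (Fintype.card ι : ℝ) - 1 ≠ 0 := sub_ne_zero.2 (by exact_mod_cast hι)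
  rw [sum_erase_eq_sub (mem_univ u)]
  match_scalars <;> field_simp
  ring

lemma sum_sum_norm_precond_step_sub_sq_le {E : Type*} [NormedAddCommGroup E]
    [InnerProductSpace ℝ E] {n : ℕ} (hn : n ≠ 1) (η : ℝ) (g : Fin n → E)
    {μ : E} (hμ : μ = (n : ℝ)⁻¹ • ∑ v, g v)
    {μloo : Fin n → E} (hμloo : ∀ u, μloo u = ((n : ℝ) - 1)⁻¹ • ∑ v ∈ univ.erase u, g v)
    (M : Fin n → E →L[ℝ] E) (Mbar : E →L[ℝ] E)
    {δ : Fin n → E} (hδ : ∀ u, δ u = -(η • M u (μloo u))) :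
    ∑ u, ∑ v, ‖δ u - δ v‖ ^ 2 ≤ η ^ 2 * (4 * n * (∑ u, ‖(M u - Mbar) μ‖ ^ 2
      + ((n : ℝ) - 1)⁻¹ ^ 2 * ∑ u, ‖M u (g u - μ)‖ ^ 2)) := by
  have hdev u :
      M u (μloo u) - Mbar μ = (M u - Mbar) μ - ((n : ℝ) - 1)⁻¹ • M u (g u - μ) := by
    have h := inv_card_sub_one_smul_sum_erase (ι := Fin n) (by simpa using hn) g u
    rw [Fintype.card_fin, ← hμ, ← hμloo] at h
    rw [h, map_sub, map_smul, sub_apply]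
    abel
  have hδ_sub u v : ‖δ u - δ v‖ ^ 2 = η ^ 2 * ‖M u (μloo u) - M v (μloo v)‖ ^ 2 := by
    rw [hδ, hδ, neg_sub_neg, ← smul_sub, norm_smul, mul_pow, Real.norm_eq_abs, sq_abs,
      norm_sub_rev]
  simp_rw [hδ_sub, ← mul_sum]
  gcongr
  simpa only [Fintype.card_fin] using sum_sum_norm_sub_sq_le_of_sub_eq hdev

theorem loo_cmi_precond_bound_general (d n : ℕ) (hn : 2 ≤ n)
    (σ η β B : ℝ) (hσ : 0 < σ)
    (g : Fin n → EuclideanSpace ℝ (Fin d))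
    (μ : EuclideanSpace ℝ (Fin d)) (hμ : μ = (n : ℝ)⁻¹ • ∑ v, g v)
    (μloo : Fin n → EuclideanSpace ℝ (Fin d))
    (hμloo : ∀ u, μloo u = ((n : ℝ) - 1)⁻¹ • ∑ v ∈ univ.erase u, g v)
    (M : Fin n → EuclideanSpace ℝ (Fin d) →L[ℝ] EuclideanSpace ℝ (Fin d))
    (Mbar : EuclideanSpace ℝ (Fin d) →L[ℝ] EuclideanSpace ℝ (Fin d))
    (Θ₀ : EuclideanSpace ℝ (Fin d))
    (δ : Fin n → EuclideanSpace ℝ (Fin d)) (hδ : ∀ u, δ u = -(η • M u (μloo u))) :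
    (n : ℝ≥0∞)⁻¹ *
        ∑ u, klDiv (gaussianPi (Θ₀ + δ u) σ) ((n : ℝ≥0∞)⁻¹ • ∑ v, gaussianPi (Θ₀ + δ v) σ) ≤
      ENNReal.ofReal
        ((3 * η ^ 2 / σ ^ 2) * ((n : ℝ) / ((n : ℝ) - 1)) ^ 2
            * ((1 / n) * ∑ u, ‖(M u - Mbar) μ‖ ^ 2)
          + (3 * η ^ 2 / (σ ^ 2 * ((n : ℝ) - 1) ^ 2))
            * ((1 / n) * ∑ u, ‖M u (g u - μ)‖ ^ 2)
          + 3 * η ^ 2 * β ^ 2 * B ^ 2 / (σ ^ 2 * ((n : ℝ) - 1) ^ 2 * (n : ℝ) ^ 2)) := by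
  have : Nonempty (Fin n) := ⟨⟨0, by omega⟩⟩
  have hKL := inv_card_mul_sum_klDiv_gaussianPi_le (fun u => Θ₀ + δ u) hσ.ne'
  simp only [Fintype.card_fin, add_sub_add_left_eq_sub] at hKL
  refine hKL.trans (ENNReal.ofReal_le_ofReal ?_)
  have hspread := sum_sum_norm_precond_step_sub_sq_le (by omega) η g hμ hμloo M Mbar hδ
  set SA := ∑ u, ‖(M u - Mbar) μ‖ ^ 2
  set SC := ∑ u, ‖M u (g u - μ)‖ ^ 2
  have hn1 : (1 : ℝ) ≤ (n : ℝ) - 1 := by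
    have : (2 : ℝ) ≤ n := by exact_mod_cast hn
    linarith
  have hratio : 1 ≤ ((n : ℝ) / ((n : ℝ) - 1)) ^ 2 :=
    one_le_pow₀ ((one_le_div (by linarith)).2 (by linarith))
  have hA : 0 ≤ η ^ 2 / σ ^ 2 * (1 / n * SA) := by positivity
  have hC : 0 ≤ η ^ 2 / (σ ^ 2 * ((n : ℝ) - 1) ^ 2) * (1 / n * SC) := by positivity
  have hT : 0 ≤ 3 * η ^ 2 * β ^ 2 * B ^ 2 / (σ ^ 2 * ((n : ℝ) - 1) ^ 2 * n ^ 2) := by positivity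
  calc _ ≤ η ^ 2 * (4 * n * (SA + ((n : ℝ) - 1)⁻¹ ^ 2 * SC)) / (2 * σ ^ 2 * n ^ 2) := by
        gcongr
    _ = 2 * η ^ 2 / σ ^ 2 * (1 / n * SA)
          + 2 * η ^ 2 / (σ ^ 2 * ((n : ℝ) - 1) ^ 2) * (1 / n * SC) := by
        field_simp
        ring
    _ ≤ _ := by linear_combination 3 * mul_nonneg hA (sub_nonneg.2 hratio) + hA + hC + hT

/-- Bounds for preconditioned gradient descent: the leave-one-out conditional mutual
information of the one-step preconditioned noisy update is bounded by the
preconditioned bias and variance terms plus a stability term. -/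
theorem loo_cmi_precond_bound (d n : ℕ) (hd : 1 ≤ d) (hn : 2 ≤ n)
    (σ η β B : ℝ) (hσ : 0 < σ) (hη : 0 ≤ η) (hβ : 0 ≤ β) (hB : 0 ≤ B)
    (g : Fin n → EuclideanSpace ℝ (Fin d)) (hg : ∀ u, ‖g u‖ ≤ B)
    (μ : EuclideanSpace ℝ (Fin d)) (hμ : μ = (n : ℝ)⁻¹ • ∑ v, g v)
    (μloo : Fin n → EuclideanSpace ℝ (Fin d))
    (hμloo : ∀ u, μloo u = ((n : ℝ) - 1)⁻¹ • ∑ v ∈ univ.erase u, g v)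
    (M : Fin n → EuclideanSpace ℝ (Fin d) →L[ℝ] EuclideanSpace ℝ (Fin d))
    (Mbar : EuclideanSpace ℝ (Fin d) →L[ℝ] EuclideanSpace ℝ (Fin d))
    (hMbar : Mbar = (n : ℝ)⁻¹ • ∑ v, M v)
    (hM : ∀ u v, ‖M u - M v‖ ≤ β / n)
    (Θ₀ : EuclideanSpace ℝ (Fin d))
    (δ : Fin n → EuclideanSpace ℝ (Fin d)) (hδ : ∀ u, δ u = -(η • M u (μloo u))) :
    (n : ℝ≥0∞)⁻¹ *
        ∑ u, klDiv (gaussianPi (Θ₀ + δ u) σ) ((n : ℝ≥0∞)⁻¹ • ∑ v, gaussianPi (Θ₀ + δ v) σ) ≤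
      ENNReal.ofReal
        ((3 * η ^ 2 / σ ^ 2) * ((n : ℝ) / ((n : ℝ) - 1)) ^ 2
            * ((1 / n) * ∑ u, ‖(M u - Mbar) μ‖ ^ 2)
          + (3 * η ^ 2 / (σ ^ 2 * ((n : ℝ) - 1) ^ 2))
            * ((1 / n) * ∑ u, ‖M u (g u - μ)‖ ^ 2)
          + 3 * η ^ 2 * β ^ 2 * B ^ 2 / (σ ^ 2 * ((n : ℝ) - 1) ^ 2 * (n : ℝ) ^ 2)) :=
  loo_cmi_precond_bound_general d n hn σ η β B hσ g μ hμ μloo hμloo M Mbar Θ₀ δ hδ
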